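/- arXiv:2310.04833 — 3 statements merged into one kernel-verified Lean document; each statement's English description precedes it below -/
import Mathlib

section
/- Let J ≥ 1, let λ_j, η_j > 0 and c_j > 0 for 1 ≤ j ≤ J, with ∑ c_j = 1, and let ρ_j = η_j/λ_j. Fix r ∈ (0,1) and let h = φ(1−r), where φ(y) is the unique positive solution of ∑_j ρ_j c_j/(ρ_j + φ(y)) = y. Then the point f = (f_j) with f_j = η_j c_j/(η_j + λ_j h) satisfies, for each j, λ_j f_j · ⟨η, c − f⟩/⟨λ, f⟩ = η_j (c_j − f_j), and moreover ∑_j f_j = 1 − r. Here ⟨x,y⟩ = ∑_j x_j y_j. -/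
open Finset

theorem stmt2 (J : ℕ) (hJ : 1 ≤ J) (lam eta c : Fin J → ℝ)
    (hlam : ∀ j, 0 < lam j) (heta : ∀ j, 0 < eta j) (hc : ∀ j, 0 < c j)
    (hc1 : ∑ j, c j = 1)
    (ρ : Fin J → ℝ) (hρ : ∀ j, ρ j = eta j / lam j)
    (r : ℝ) (hr : r ∈ Set.Ioo (0 : ℝ) 1)
    (h : ℝ) (hpos : 0 < h)
    (hsol : ∑ j, ρ j * c j / (ρ j + h) = 1 - r)
    (f : Fin J → ℝ) (hf : ∀ j, f j = eta j * c j / (eta j + lam j * h)) :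
    (∀ j, lam j * f j * ((∑ k, eta k * (c k - f k)) / (∑ k, lam k * f k))
        = eta j * (c j - f j)) ∧
    ∑ j, f j = 1 - r := by
  have hden : ∀ j, eta j + lam j * h ≠ 0 := by
    intro j
    have h1 := heta j; have h2 := hlam j
    positivity
  have key : ∀ j, eta j * (c j - f j) = h * (lam j * f j) := by
    intro j
    rw [hf j]
    field_simp [hden j]
    ring
  have hfpos : ∀ j, 0 < f j := by
    intro j
    have h1 := heta j; have h2 := hlam j; have h3 := hc j
    rw [hf j]; positivity
  have hsum : 0 < ∑ k, lam k * f k := by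
    apply Finset.sum_pos
    · intro k _; exact mul_pos (hlam k) (hfpos k)
    · exact Finset.univ_nonempty_iff.mpr (Fin.pos_iff_nonempty.mp hJ)
  constructor
  · intro j
    have : (∑ k, eta k * (c k - f k)) = h * ∑ k, lam k * f k := by
      rw [Finset.mul_sum]; exact Finset.sum_congr rfl fun k _ => key k
    rw [this, mul_div_assoc, div_self (ne_of_gt hsum), mul_one, key j]
    ring
  · rw [← hsol]
    apply Finset.sum_congr rfl
    intro j _
    rw [hf j, hρ j]
    have hl := (hlam j).ne'
    field_simp
end

section
/- Let J ≥ 1, λ_j, η_j > 0, C_j ∈ ℕ for 1 ≤ j ≤ J, with ρ_j = η_j/λ_j. Consider the continuous-time Markov chain on S = ∏_j {0,…,C_j} with transition rates q(x, x+e_j) = η_j (C_j − x_j) and q(x, x−e_j) = λ_j x_j (x_1+⋯+x_J). Then the probability distribution π(x) proportional to (1/‖x‖!) ∏_j ρ_j^{x_j} · binomial(C_j, x_j), where ‖x‖ = x_1+⋯+x_J, satisfies the detailed balance equations π(x) q(x, x+e_j) = π(x+e_j) q(x+e_j, x) for all admissible x and j; in particular the chain is reversible with invariant distribution π. -/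
open Finset

theorem stmt4 (J : ℕ) (hJ : 1 ≤ J) (lam eta : Fin J → ℝ) (C : Fin J → ℕ)
    (hlam : ∀ j, 0 < lam j) (heta : ∀ j, 0 < eta j)
    (ρ : Fin J → ℝ) (hρ : ∀ j, ρ j = eta j / lam j)
    (π : (Fin J → ℕ) → ℝ) (Z : ℝ) (hZ : 0 < Z)
    (hπ : ∀ x : Fin J → ℕ, π x =
      Z * ((1 / (Nat.factorial (∑ j, x j) : ℝ)) *
        ∏ j, (ρ j ^ (x j) * (Nat.choose (C j) (x j) : ℝ)))) :
    ∀ x : Fin J → ℕ, (∀ k, x k ≤ C k) → ∀ j : Fin J, x j < C j →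
      π x * (eta j * ((C j : ℝ) - (x j : ℝ)))
        = π (Function.update x j (x j + 1)) *
          (lam j * ((x j : ℝ) + 1) * ((∑ k, (x k : ℝ)) + 1)) := by
  intro x hx j hj
  set y := Function.update x j (x j + 1) with hy
  have hyj : y j = x j + 1 := Function.update_self _ _ _
  have hyk : ∀ k, k ≠ j → y k = x k := fun k hk => Function.update_of_ne hk _ _
  have hsum : (∑ k, y k) = (∑ k, x k) + 1 := by
    have h1 : (∑ k, y k) = y j + ∑ k ∈ Finset.univ.erase j, y k :=
      (Finset.add_sum_erase _ y (Finset.mem_univ j)).symm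
    have h2 : (∑ k, x k) = x j + ∑ k ∈ Finset.univ.erase j, x k :=
      (Finset.add_sum_erase _ x (Finset.mem_univ j)).symm
    have h3 : (∑ k ∈ Finset.univ.erase j, y k) = ∑ k ∈ Finset.univ.erase j, x k :=
      Finset.sum_congr rfl (fun k hk => hyk k (Finset.ne_of_mem_erase hk))
    rw [h1, h2, h3, hyj]; ring
  have hprod : (∏ k, (ρ k ^ (y k) * (Nat.choose (C k) (y k) : ℝ)))
      = (ρ j ^ (x j + 1) * (Nat.choose (C j) (x j + 1) : ℝ)) *
        ∏ k ∈ Finset.univ.erase j, (ρ k ^ (x k) * (Nat.choose (C k) (x k) : ℝ)) := by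
    rw [← Finset.mul_prod_erase _ _ (Finset.mem_univ j), hyj]
    congr 1
    exact Finset.prod_congr rfl fun k hk => by rw [hyk k (Finset.ne_of_mem_erase hk)]
  have hprodx : (∏ k, (ρ k ^ (x k) * (Nat.choose (C k) (x k) : ℝ)))
      = (ρ j ^ (x j) * (Nat.choose (C j) (x j) : ℝ)) *
        ∏ k ∈ Finset.univ.erase j, (ρ k ^ (x k) * (Nat.choose (C k) (x k) : ℝ)) :=
    (Finset.mul_prod_erase _ _ (Finset.mem_univ j)).symm
  have hchoose : ((Nat.choose (C j) (x j + 1)) : ℝ) * ((x j : ℝ) + 1)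
      = (Nat.choose (C j) (x j) : ℝ) * ((C j : ℝ) - (x j : ℝ)) := by
    have h := Nat.choose_succ_right_eq (C j) (x j)
    have hle : x j ≤ C j := le_of_lt hj
    have h2 : ((Nat.choose (C j) (x j + 1) * (x j + 1) : ℕ) : ℝ)
        = ((Nat.choose (C j) (x j) * (C j - x j) : ℕ) : ℝ) := congrArg (fun n : ℕ => (n : ℝ)) h
    push_cast [Nat.cast_sub hle] at h2
    linarith [h2]
  have heq : eta j = ρ j * lam j := by
    rw [hρ j, div_mul_cancel₀ _ (ne_of_gt (hlam j))]
  have hfac : ((Nat.factorial ((∑ k, x k) + 1)) : ℝ)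
      = ((∑ k, (x k : ℝ)) + 1) * (Nat.factorial (∑ k, x k) : ℝ) := by
    rw [Nat.factorial_succ]; push_cast; ring
  have hsumcast : ((∑ k, x k : ℕ) : ℝ) = ∑ k, (x k : ℝ) := by push_cast; rfl
  have hfacne : (Nat.factorial (∑ k, x k) : ℝ) ≠ 0 := by
    exact_mod_cast Nat.factorial_ne_zero _
  have hsumpos : (0:ℝ) < (∑ k, (x k : ℝ)) + 1 := by
    positivity
  rw [hπ x, hπ y, hsum, hprod, hprodx, hfac, heq, pow_succ]
  have hne : ((∑ k, (x k:ℝ)) + 1) ≠ 0 := ne_of_gt hsumpos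
  field_simp
  linear_combination (-(ρ j * ρ j ^ x j *
    (∏ k ∈ Finset.univ.erase j, (ρ k ^ x k * ((Nat.choose (C k) (x k)):ℝ))) * lam j)) * hchoose
end

section
/- Let J ≥ 1, let A_1,…,A_J and B_1,…,B_J be bounded real random variables with B_j > 0 almost surely, such that A_j and B_j are measurable with respect to a σ-field F_j, and suppose that for each j, E[ (∑_k A_k B_k)/(∑_k B_k) | F_j ] = A_j almost surely. Then almost surely A_1 = A_2 = ⋯ = A_J. -/
open Finset MeasureTheory

lemma double_sum_sq {n : ℕ} (a b : Fin n → ℝ) :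
    ∑ p, ∑ q, (a p - a q)^2 * (b p * b q)
      = 2 * ((∑ p, (a p)^2 * b p) * (∑ q, b q) - (∑ p, a p * b p)^2) := by
  have h1 : ∀ p : Fin n, ∑ q, (a p - a q)^2 * (b p * b q)
      = ((a p)^2 * b p) * (∑ q, b q) - (a p * b p) * (2 * ∑ q, a q * b q)
        + (∑ q, (a q)^2 * b q) * b p := by
    intro p
    rw [Finset.mul_sum, Finset.mul_sum, Finset.sum_mul, Finset.mul_sum,
      ← Finset.sum_sub_distrib, ← Finset.sum_add_distrib]
    exact Finset.sum_congr rfl fun q _ => by ring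
  rw [Finset.sum_congr rfl fun p _ => h1 p, Finset.sum_add_distrib, Finset.sum_sub_distrib,
    ← Finset.sum_mul, ← Finset.sum_mul, ← Finset.mul_sum]
  ring

theorem stmt7 {Ω : Type*} [m0 : MeasurableSpace Ω] (μ : Measure Ω)
    [IsProbabilityMeasure μ]
    (J : ℕ) (hJ : 1 ≤ J)
    (A B : Fin J → Ω → ℝ) (F : Fin J → MeasurableSpace Ω)
    (hF : ∀ j, F j ≤ m0)
    (hAmeas : ∀ j, StronglyMeasurable[F j] (A j))
    (hBmeas : ∀ j, StronglyMeasurable[F j] (B j))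
    (M : ℝ) (hbound : ∀ j, ∀ᵐ ω ∂μ, |A j ω| ≤ M ∧ |B j ω| ≤ M)
    (hBpos : ∀ j, ∀ᵐ ω ∂μ, 0 < B j ω)
    (hcond : ∀ j : Fin J,
      MeasureTheory.condExp (F j) μ
          (fun ω => (∑ k, A k ω * B k ω) / (∑ k, B k ω))
        =ᵐ[μ] A j) :
    ∀ j k : Fin J, A j =ᵐ[μ] A k := by
  have hae : (ae μ).NeBot := by infer_instance
  have hM : 0 ≤ M := by
    obtain ⟨ω, h⟩ := (hbound ⟨0, hJ⟩).exists
    exact le_trans (abs_nonneg _) h.1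
  set X : Ω → ℝ := fun ω => (∑ k, A k ω * B k ω) / (∑ k, B k ω) with hXdef
  have hAm : ∀ j, Measurable (A j) := fun j => ((hAmeas j).mono (hF j)).measurable
  have hBm : ∀ j, Measurable (B j) := fun j => ((hBmeas j).mono (hF j)).measurable
  have hXm : Measurable X := (Finset.measurable_sum univ fun k _ => (hAm k).mul (hBm k)).div
    (Finset.measurable_sum univ fun k _ => hBm k)
  have hne : (univ : Finset (Fin J)).Nonempty := ⟨⟨0, hJ⟩, mem_univ _⟩
  have hgood : ∀ᵐ ω ∂μ, ∀ j : Fin J, (|A j ω| ≤ M ∧ |B j ω| ≤ M) ∧ 0 < B j ω := by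
    rw [ae_all_iff]
    intro j
    filter_upwards [hbound j, hBpos j] with ω h1 h2
    exact ⟨h1, h2⟩
  have hXb : ∀ᵐ ω ∂μ, |X ω| ≤ M := by
    filter_upwards [hgood] with ω h
    have hS : 0 < ∑ k, B k ω := Finset.sum_pos (fun k _ => (h k).2) hne
    have hT : |∑ k, A k ω * B k ω| ≤ M * ∑ k, B k ω := by
      calc |∑ k, A k ω * B k ω| ≤ ∑ k, |A k ω * B k ω| := Finset.abs_sum_le_sum_abs _ _
        _ ≤ ∑ k, M * B k ω := Finset.sum_le_sum fun k _ => by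
            rw [abs_mul, abs_of_pos (h k).2]
            exact mul_le_mul_of_nonneg_right (h k).1.1 (le_of_lt (h k).2)
        _ = M * ∑ k, B k ω := by rw [Finset.mul_sum]
    show |(∑ k, A k ω * B k ω) / (∑ k, B k ω)| ≤ M
    rw [abs_div, abs_of_pos hS, div_le_iff₀ hS]
    exact hT
  have hInt : ∀ (f : Ω → ℝ) (C : ℝ), Measurable f → (∀ᵐ ω ∂μ, |f ω| ≤ C) → Integrable f μ :=
    fun f C hf hC => Integrable.mono' (integrable_const C) hf.aestronglyMeasurable
      (by filter_upwards [hC] with ω h; rwa [Real.norm_eq_abs])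
  have hXint : Integrable X μ := hInt X M hXm hXb
  have hABXint : ∀ j, Integrable (fun ω => A j ω * B j ω * X ω) μ := by
    intro j
    refine hInt _ (M * M * M) (((hAm j).mul (hBm j)).mul hXm) ?_
    filter_upwards [hgood, hXb] with ω h hx
    rw [abs_mul, abs_mul]
    exact mul_le_mul (mul_le_mul (h j).1.1 (h j).1.2 (abs_nonneg _) hM) hx (abs_nonneg _)
      (by positivity)
  have hA2Bint : ∀ j, Integrable (fun ω => (A j ω)^2 * B j ω) μ := by
    intro j
    refine hInt _ (M * M * M) (((hAm j).pow_const 2).mul (hBm j)) ?_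
    filter_upwards [hgood] with ω h
    have e : |(A j ω)^2 * B j ω| = |A j ω| * |A j ω| * |B j ω| := by
      rw [abs_mul, sq, abs_mul]
    rw [e]
    exact mul_le_mul (mul_le_mul (h j).1.1 (h j).1.1 (abs_nonneg _) hM)
      (h j).1.2 (abs_nonneg _) (by positivity)
  -- key conditional expectation step
  have key : ∀ j, ∫ ω, A j ω * B j ω * X ω ∂μ = ∫ ω, (A j ω)^2 * B j ω ∂μ := by
    intro j
    have hfg : Integrable ((fun ω => A j ω * B j ω) * X) μ := hABXint j
    have h1 := condExp_mul_of_stronglyMeasurable_left ((hAmeas j).mul (hBmeas j)) hfg hXint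
    have h3 : (fun ω => A j ω * B j ω) * (MeasureTheory.condExp (F j) μ X)
        =ᵐ[μ] fun ω => (A j ω)^2 * B j ω := by
      filter_upwards [hcond j] with ω h
      simp only [Pi.mul_apply, h]
      ring
    have h2 : ∫ ω, (MeasureTheory.condExp (F j) μ ((fun ω => A j ω * B j ω) * X)) ω ∂μ
        = ∫ ω, ((fun ω => A j ω * B j ω) * X) ω ∂μ := integral_condExp (hF j)
    calc ∫ ω, A j ω * B j ω * X ω ∂μ
        = ∫ ω, (MeasureTheory.condExp (F j) μ ((fun ω => A j ω * B j ω) * X)) ω ∂μ := h2.symm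
      _ = ∫ ω, ((fun ω => A j ω * B j ω) * (MeasureTheory.condExp (F j) μ X)) ω ∂μ :=
          integral_congr_ae h1
      _ = ∫ ω, (A j ω)^2 * B j ω ∂μ := integral_congr_ae h3
  -- integrability of T*X
  have hTXint : Integrable (fun ω => (∑ j, A j ω * B j ω) * X ω) μ := by
    refine hInt _ ((J : ℝ) * (M * M) * M)
      ((Finset.measurable_sum univ fun k _ => (hAm k).mul (hBm k)).mul hXm) ?_
    filter_upwards [hgood, hXb] with ω h hx
    rw [abs_mul]
    refine mul_le_mul ?_ hx (abs_nonneg _) (by positivity)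
    calc |∑ k, A k ω * B k ω| ≤ ∑ k, |A k ω * B k ω| := Finset.abs_sum_le_sum_abs _ _
      _ ≤ ∑ _k : Fin J, M * M := Finset.sum_le_sum fun k _ => by
          rw [abs_mul]
          exact mul_le_mul (h k).1.1 (h k).1.2 (abs_nonneg _) hM
      _ = (J : ℝ) * (M * M) := by
          rw [Finset.sum_const, Finset.card_univ, Fintype.card_fin, nsmul_eq_mul]
  set Y : Ω → ℝ := fun ω => (∑ j, (A j ω)^2 * B j ω) - (∑ j, A j ω * B j ω) * X ω with hYdef
  have hYint : Integrable Y μ :=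
    (integrable_finset_sum univ fun j _ => hA2Bint j).sub hTXint
  have hY0int : ∫ ω, Y ω ∂μ = 0 := by
    have h1 : ∫ ω, Y ω ∂μ = (∫ ω, ∑ j, (A j ω)^2 * B j ω ∂μ)
        - ∫ ω, (∑ j, A j ω * B j ω) * X ω ∂μ :=
      integral_sub (integrable_finset_sum univ fun j _ => hA2Bint j) hTXint
    have h2 : ∫ ω, (∑ j, A j ω * B j ω) * X ω ∂μ = ∫ ω, ∑ j, (A j ω)^2 * B j ω ∂μ := by
      have e : ∀ ω, (∑ j, A j ω * B j ω) * X ω = ∑ j, A j ω * B j ω * X ω := fun ω =>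
        Finset.sum_mul _ _ _
      rw [integral_congr_ae (Filter.Eventually.of_forall e),
        integral_finset_sum univ fun j _ => hABXint j,
        integral_finset_sum univ fun j _ => hA2Bint j]
      exact Finset.sum_congr rfl fun j _ => key j
    rw [h1, h2, sub_self]
  have hYnn : 0 ≤ᵐ[μ] Y := by
    filter_upwards [hgood] with ω h
    have hS : 0 < ∑ k, B k ω := Finset.sum_pos (fun k _ => (h k).2) hne
    have hD : 0 ≤ ∑ p, ∑ q, (A p ω - A q ω)^2 * (B p ω * B q ω) :=
      Finset.sum_nonneg fun p _ => Finset.sum_nonneg fun q _ =>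
        mul_nonneg (sq_nonneg _) (mul_nonneg (h p).2.le (h q).2.le)
    rw [double_sum_sq (fun p => A p ω) (fun p => B p ω)] at hD
    have hineq : (∑ k, A k ω * B k ω)^2 ≤ (∑ p, (A p ω)^2 * B p ω) * (∑ k, B k ω) := by
      nlinarith [hD]
    show (0 : ℝ) ≤ (∑ j, (A j ω)^2 * B j ω) - (∑ j, A j ω * B j ω) * X ω
    have hXval : X ω = (∑ k, A k ω * B k ω) / (∑ k, B k ω) := rfl
    rw [hXval, sub_nonneg, mul_div_assoc', ← sq, div_le_iff₀ hS]
    exact hineq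
  have hYzero : Y =ᵐ[μ] 0 := (integral_eq_zero_iff_of_nonneg_ae hYnn hYint).1 hY0int
  intro j k
  filter_upwards [hgood, hYzero] with ω h hy
  have hS : 0 < ∑ p, B p ω := Finset.sum_pos (fun p _ => (h p).2) hne
  have hy' : (∑ p, (A p ω)^2 * B p ω) - (∑ p, A p ω * B p ω) * X ω = 0 := hy
  have hXval : X ω = (∑ p, A p ω * B p ω) / (∑ p, B p ω) := rfl
  rw [hXval, mul_div_assoc', ← sq, sub_eq_zero] at hy'
  have heq : (∑ p, (A p ω)^2 * B p ω) * (∑ p, B p ω) = (∑ p, A p ω * B p ω)^2 := by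
    rw [hy', div_mul_cancel₀ _ hS.ne']
  have hD : ∑ p, ∑ q, (A p ω - A q ω)^2 * (B p ω * B q ω) = 0 := by
    rw [double_sum_sq (fun p => A p ω) (fun p => B p ω), heq, sub_self, mul_zero]
  have hnn : ∀ p q : Fin J, 0 ≤ (A p ω - A q ω)^2 * (B p ω * B q ω) := fun p q =>
    mul_nonneg (sq_nonneg _) (mul_nonneg (h p).2.le (h q).2.le)
  have hinner : ∑ q, (A j ω - A q ω)^2 * (B j ω * B q ω) = 0 :=
    (Finset.sum_eq_zero_iff_of_nonneg fun p _ =>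
      Finset.sum_nonneg fun q _ => hnn p q).1 hD j (mem_univ j)
  have hterm : (A j ω - A k ω)^2 * (B j ω * B k ω) = 0 :=
    (Finset.sum_eq_zero_iff_of_nonneg fun q _ => hnn j q).1 hinner k (mem_univ k)
  have hBne : B j ω * B k ω ≠ 0 := (mul_pos (h j).2 (h k).2).ne'
  have h2 := (mul_eq_zero.1 hterm).resolve_right hBne
  have h3 : A j ω - A k ω = 0 := by
    have := sq_eq_zero_iff.1 h2
    exact this
  linarith
end
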